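/- Let B be the 3×3 integer matrix with columns b_1 = (3, 1, −1), b_2 = (1, −1, 2), b_3 = (1, −2, −2), and let σ_{1,3}(B) = (b_3, b_1, b_2) and σ_{2,3}(B) = (b_1, b_3, b_2). Then SS(σ_{1,3}(B)) = 2239/90, SS(σ_{2,3}(B)) = 24809/990, SS(B) − SS(σ_{1,3}(B)) = 68/495 > 0, and Pot(σ_{1,3}(B)) = 428,490 > 384,054 = Pot(B); hence Pot is not monotonically decreasing under the insertion performed by 1-S²LLL on this input. -/

import Mathlib

/-- Helper instance (provable; works around an instance-resolution hiccup). -/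
instance (n : ℕ) : WellFoundedLT (Fin n) := inferInstance

/-- The potential `Pot(B) = B₁³ B₂² B₃` of a triple of vectors in `ℝ³`, where
`B_i = ‖bᵢ*‖²` (`0`-indexed exponent `3 − i`). -/
noncomputable def Pot3 (f : Fin 3 → EuclideanSpace ℝ (Fin 3)) : ℝ :=
  ∏ i : Fin 3, (‖InnerProductSpace.gramSchmidt ℝ f i‖ ^ 2) ^ (3 - (i : ℕ))

/-- The squared-sum `SS(B) = B₁ + B₂ + B₃` of a triple of vectors in `ℝ³`, where
`B_i = ‖bᵢ*‖²`. -/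
noncomputable def SS3 (f : Fin 3 → EuclideanSpace ℝ (Fin 3)) : ℝ :=
  ∑ i : Fin 3, ‖InnerProductSpace.gramSchmidt ℝ f i‖ ^ 2

/-!
Every `B_i = ‖bᵢ*‖²` is a rational function of the Gram matrix `G` of the input triple, by the
Pythagorean identity `‖bₙ*‖² = ‖bₙ‖² - ∑_{i<n} ⟪bᵢ*, bₙ⟫² / ‖bᵢ*‖²`. The three bases are
permutations of `b`, so everything is read off the single Gram matrix
`G = [[11, 0, 3], [0, 6, -1], [3, -1, 9]]`: the profiles `(B₁, B₂, B₃)` are `(11, 6, 529/66)` for `b`,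
`(9, 10, 529/90)` for `σ_{1,3}(b)` and `(11, 90/11, 529/90)` for `σ_{2,3}(b)`, the product
`B₁B₂B₃ = det G = 529` being the same for all three.
-/

open InnerProductSpace RealInnerProductSpace Finset

section GramSchmidt

variable {E : Type*} [NormedAddCommGroup E] [InnerProductSpace ℝ E]

theorem inner_gramSchmidt_apply_eq_norm_sq {ι : Type*} [LinearOrder ι] [LocallyFiniteOrderBot ι]
    [WellFoundedLT ι] (f : ι → E) (n : ι) :
    ⟪gramSchmidt ℝ f n, f n⟫ = ‖gramSchmidt ℝ f n‖ ^ 2 := by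
  conv_lhs => rw [gramSchmidt_def'' ℝ f n]
  rw [inner_add_right, real_inner_self_eq_norm_sq, inner_sum, add_eq_left]
  refine sum_eq_zero fun i hi => ?_
  rw [inner_smul_right, gramSchmidt_orthogonal ℝ f (mem_Iio.1 hi).ne', mul_zero]

theorem norm_sq_gramSchmidt {ι : Type*} [LinearOrder ι] [LocallyFiniteOrderBot ι]
    [WellFoundedLT ι] (f : ι → E) (n : ι) :
    ‖gramSchmidt ℝ f n‖ ^ 2 =
      ‖f n‖ ^ 2 - ∑ i ∈ Iio n, ⟪gramSchmidt ℝ f i, f n⟫ ^ 2 / ‖gramSchmidt ℝ f i‖ ^ 2 := by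
  rw [← inner_gramSchmidt_apply_eq_norm_sq, eq_sub_of_add_eq (gramSchmidt_def'' ℝ f n).symm,
    inner_sub_left, real_inner_self_eq_norm_sq, sum_inner]
  simp only [real_inner_smul_left, RCLike.ofReal_real_eq_id, id]
  congr 1
  exact sum_congr rfl fun i _ => by ring

theorem gramSchmidt_fin_zero {n : ℕ} (f : Fin (n + 1) → E) : gramSchmidt ℝ f 0 = f 0 := by
  rw [← bot_eq_zero, gramSchmidt_bot]

variable (f : Fin 3 → E)

theorem norm_sq_gramSchmidt_fin_three_zero : ‖gramSchmidt ℝ f 0‖ ^ 2 = ⟪f 0, f 0⟫ := by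
  rw [gramSchmidt_fin_zero, real_inner_self_eq_norm_sq]

theorem norm_sq_gramSchmidt_fin_three_one :
    ‖gramSchmidt ℝ f 1‖ ^ 2 = ⟪f 1, f 1⟫ - ⟪f 0, f 1⟫ ^ 2 / ⟪f 0, f 0⟫ := by
  rw [norm_sq_gramSchmidt, show Iio (1 : Fin 3) = {0} by decide, sum_singleton,
    norm_sq_gramSchmidt_fin_three_zero, gramSchmidt_fin_zero]
  simp only [real_inner_self_eq_norm_sq]

theorem inner_gramSchmidt_fin_three_one_two :
    ⟪gramSchmidt ℝ f 1, f 2⟫ = ⟪f 1, f 2⟫ - ⟪f 0, f 1⟫ * ⟪f 0, f 2⟫ / ⟪f 0, f 0⟫ := by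
  have h := gramSchmidt_def'' ℝ f 1
  rw [show Iio (1 : Fin 3) = {0} by decide, sum_singleton, gramSchmidt_fin_zero] at h
  rw [eq_sub_of_add_eq h.symm, real_inner_self_eq_norm_sq]
  simp only [inner_sub_left, real_inner_smul_left, RCLike.ofReal_real_eq_id, id]
  ring

theorem norm_sq_gramSchmidt_fin_three_two :
    ‖gramSchmidt ℝ f 2‖ ^ 2 = ⟪f 2, f 2⟫ - ⟪f 0, f 2⟫ ^ 2 / ⟪f 0, f 0⟫ -
      (⟪f 1, f 2⟫ - ⟪f 0, f 1⟫ * ⟪f 0, f 2⟫ / ⟪f 0, f 0⟫) ^ 2 /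
        (⟪f 1, f 1⟫ - ⟪f 0, f 1⟫ ^ 2 / ⟪f 0, f 0⟫) := by
  rw [norm_sq_gramSchmidt, show Iio (2 : Fin 3) = {0, 1} by decide, sum_pair (by decide),
    norm_sq_gramSchmidt_fin_three_zero, norm_sq_gramSchmidt_fin_three_one,
    inner_gramSchmidt_fin_three_one_two, gramSchmidt_fin_zero, sub_sub]
  simp only [real_inner_self_eq_norm_sq]

end GramSchmidt

theorem EuclideanSpace.inner_toLp_fin_three (x y : Fin 3 → ℝ) :
    ⟪WithLp.toLp 2 x, WithLp.toLp 2 y⟫ = x 0 * y 0 + x 1 * y 1 + x 2 * y 2 := by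
  simp only [EuclideanSpace.inner_toLp_toLp, dotProduct, Fin.sum_univ_three, Pi.star_apply,
    star_trivial]
  ring

/-- Let `b` have columns `b₁ = (3, 1, −1)`, `b₂ = (1, −1, 2)`,
`b₃ = (1, −2, −2)`, and let `σ_{1,3}(b) = (b₃, b₁, b₂)` and `σ_{2,3}(b) = (b₁, b₃, b₂)`.
Then `SS(σ_{1,3}(b)) = 2239/90`, `SS(σ_{2,3}(b)) = 24809/990`,
`SS(b) − SS(σ_{1,3}(b)) = 68/495 > 0`, and
`Pot(σ_{1,3}(b)) = 428490 > 384054 = Pot(b)`; hence `Pot` is not monotonically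
decreasing under the insertion performed by `1`-`S²`LLL on this input. -/
theorem stmt_19 (b : Fin 3 → EuclideanSpace ℝ (Fin 3))
    (hb0 : b 0 = (WithLp.equiv 2 (Fin 3 → ℝ)).symm ![3, 1, -1])
    (hb1 : b 1 = (WithLp.equiv 2 (Fin 3 → ℝ)).symm ![1, -1, 2])
    (hb2 : b 2 = (WithLp.equiv 2 (Fin 3 → ℝ)).symm ![1, -2, -2]) :
    SS3 ![b 2, b 0, b 1] = 2239 / 90 ∧
      SS3 ![b 0, b 2, b 1] = 24809 / 990 ∧
      SS3 b - SS3 ![b 2, b 0, b 1] = 68 / 495 ∧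
      0 < SS3 b - SS3 ![b 2, b 0, b 1] ∧
      Pot3 ![b 2, b 0, b 1] = 428490 ∧
      Pot3 b = 384054 ∧
      Pot3 b < Pot3 ![b 2, b 0, b 1] := by
  simp only [SS3, Pot3, Fin.sum_univ_three, Fin.prod_univ_three,
    norm_sq_gramSchmidt_fin_three_zero, norm_sq_gramSchmidt_fin_three_one,
    norm_sq_gramSchmidt_fin_three_two, Matrix.cons_val_zero, Matrix.cons_val_one,
    Matrix.cons_val_two, Matrix.head_cons, Matrix.tail_cons, hb0, hb1, hb2,
    WithLp.equiv_symm_apply, EuclideanSpace.inner_toLp_fin_three]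
  norm_num [Matrix.cons_val]
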